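/- Let V = ℤⁿ with the nearest-neighbor weights ω(x,y) = 1 iff |x−y| = 1, μ ≡ 2n, Laplacian Δf(x) = (1/(2n)) ∑_{|y−x|=1} (f(y) − f(x)), and let f(x) = |x| (Euclidean norm). Then there exists a constant C = C(n) such that |Δf(x)| ≤ C/|x| for all x ∈ ℤⁿ with |x| ≥ 1. -/

import Mathlib

/-- Euclidean norm of a lattice point. -/
noncomputable def latticeNorm {n : ℕ} (x : Fin n → ℤ) : ℝ :=
  Real.sqrt (∑ i, ((x i : ℝ)) ^ 2)

/-- The `i`-th standard basis vector of `ℤⁿ`. -/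
def latticeBasis {n : ℕ} (i : Fin n) : Fin n → ℤ := fun j => if j = i then 1 else 0

/-!
Pair each neighbour `x + eᵢ` with the opposite one `x - eᵢ`. The symmetric second difference
`‖v + e‖ + ‖v - e‖ - 2‖v‖` is nonnegative by the triangle inequality, and by the parallelogram law
`(‖v + e‖ + ‖v - e‖)² ≤ 2 (‖v + e‖² + ‖v - e‖²) = 4 (‖v‖² + ‖e‖²) ≤ (2‖v‖ + ‖e‖² / ‖v‖)²`
it is at most `‖e‖² / ‖v‖`. The first-order terms `± xᵢ / |x|` thus cancel, and summing over the
`n` directions gives `0 ≤ Δf(x) ≤ 1 / (2|x|)`.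
-/

theorem two_mul_norm_le_norm_add_add_norm_sub {E : Type*} [SeminormedAddCommGroup E]
    [NormedSpace ℝ E] (v e : E) : 2 * ‖v‖ ≤ ‖v + e‖ + ‖v - e‖ := by
  calc 2 * ‖v‖ = ‖(v + e) + (v - e)‖ := by
        rw [add_add_sub_cancel, ← two_smul ℝ v, norm_smul, Real.norm_two]
    _ ≤ ‖v + e‖ + ‖v - e‖ := norm_add_le _ _

theorem norm_add_add_norm_sub_le {E : Type*} [NormedAddCommGroup E] [InnerProductSpace ℝ E]
    {v : E} (hv : 0 < ‖v‖) (e : E) : ‖v + e‖ + ‖v - e‖ ≤ 2 * ‖v‖ + ‖e‖ ^ 2 / ‖v‖ := by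
  have parallelogram := parallelogram_law_with_norm ℝ v e
  have hquot : ‖e‖ ^ 2 / ‖v‖ * ‖v‖ = ‖e‖ ^ 2 := div_mul_cancel₀ _ hv.ne'
  refine le_of_sq_le_sq ?_ (by positivity)
  nlinarith [sq_nonneg (‖v + e‖ - ‖v - e‖), sq_nonneg (‖e‖ ^ 2 / ‖v‖)]

noncomputable def latticeEmbedding (n : ℕ) : (Fin n → ℤ) →+ EuclideanSpace ℝ (Fin n) where
  toFun x := WithLp.toLp 2 fun i => (x i : ℝ)
  map_zero' := by ext; simp
  map_add' x y := by ext; simp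

theorem norm_latticeEmbedding {n : ℕ} (x : Fin n → ℤ) :
    ‖latticeEmbedding n x‖ = latticeNorm x := by
  simp [EuclideanSpace.norm_eq, latticeNorm, latticeEmbedding]

theorem latticeEmbedding_latticeBasis {n : ℕ} (i : Fin n) :
    latticeEmbedding n (latticeBasis i) = EuclideanSpace.single i 1 := by
  ext j
  simp [latticeEmbedding, latticeBasis]

theorem latticeNorm_second_difference_mem_Icc {n : ℕ} {x : Fin n → ℤ} (hx : 0 < latticeNorm x)
    (i : Fin n) :
    (latticeNorm (x + latticeBasis i) - latticeNorm x) +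
        (latticeNorm (x - latticeBasis i) - latticeNorm x) ∈ Set.Icc 0 (1 / latticeNorm x) := by
  simp only [← norm_latticeEmbedding, map_add, map_sub, latticeEmbedding_latticeBasis] at hx ⊢
  have upper := norm_add_add_norm_sub_le hx (EuclideanSpace.single i (1 : ℝ))
  rw [PiLp.norm_single, norm_one, one_pow] at upper
  have lower := two_mul_norm_le_norm_add_add_norm_sub (latticeEmbedding n x)
    (EuclideanSpace.single i (1 : ℝ))
  constructor <;> linarith

theorem lattice_laplacian_of_distance_general (n : ℕ) :
    ∃ C : ℝ, 0 < C ∧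
      ∀ x : Fin n → ℤ, 1 ≤ latticeNorm x →
        |(1 / (2 * (n : ℝ))) *
            ∑ i : Fin n,
              ((latticeNorm (x + latticeBasis i) - latticeNorm x) +
                (latticeNorm (x - latticeBasis i) - latticeNorm x))| ≤ C / latticeNorm x := by
  refine ⟨1 / 2, by norm_num, fun x hx => ?_⟩
  have hr : 0 < latticeNorm x := one_pos.trans_le hx
  have term_mem := latticeNorm_second_difference_mem_Icc hr
  have sum_nonneg := Finset.sum_nonneg fun i (_ : i ∈ Finset.univ) => (term_mem i).1
  have sum_le := Finset.sum_le_card_nsmul Finset.univ _ _ fun i _ => (term_mem i).2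
  rw [Finset.card_univ, Fintype.card_fin, nsmul_eq_mul] at sum_le
  rw [abs_of_nonneg (mul_nonneg (by positivity) sum_nonneg)]
  calc _ ≤ 1 / (2 * (n : ℝ)) * (n * (1 / latticeNorm x)) := by gcongr
    _ = (n / n) * (1 / 2 / latticeNorm x) := by ring
    -- `n / n ≤ 1` also holds for `n = 0`, where `1 / (2 * 0) = 0` in Lean
    _ ≤ 1 / 2 / latticeNorm x := mul_le_of_le_one_left (by positivity) (div_self_le_one _)

theorem lattice_laplacian_of_distance (n : ℕ) (hn : 0 < n) :
    ∃ C : ℝ, 0 < C ∧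
      ∀ x : Fin n → ℤ, 1 ≤ latticeNorm x →
        |(1 / (2 * (n : ℝ))) *
            ∑ i : Fin n,
              ((latticeNorm (x + latticeBasis i) - latticeNorm x) +
                (latticeNorm (x - latticeBasis i) - latticeNorm x))| ≤ C / latticeNorm x :=
  lattice_laplacian_of_distance_general n
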